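/- For any real number λ with 1/2 < λ < 1, any real z, and any vector (p,r,q) ∈ ℤ² × ℕ with q ≥ 1, there exists an integer vector (a,b,c) with (a,b) ≠ (0,0), ap + br + cq = 0, |a| ≤ q^λ, and |b + z·a| ≤ q^(1-λ). -/

import Mathlib

/-!
The pairs (a, b) that extend to a solution form the lattice `{(a, b) : q ∣ a p + b r}`. Writing
g = gcd(r, q) = u r + v q, it contains (g, -u p) and (0, q / g), so it has index at most q.
A lattice containing (m, β) and (0, Q) meets every box |a| ≤ X, |b + z a| ≤ Y with m Q ≤ X Y in a
nonzero point: if X < m, the point (0, Q) does; otherwise Dirichlet's approximation theorem for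
(β + z m) / Q with N = ⌊X / m⌋ yields k ≤ N such that k (m, β) lies within Q / (N + 1) ≤ Y of a
multiple of (0, Q).
-/

theorem exists_ne_zero_mem_abs_le_of_mul_le (L : AddSubgroup (ℤ × ℤ)) {m Q β : ℤ}
    (hm : 0 < m) (hQ : 0 < Q) (hmβ : (m, β) ∈ L) (hQL : (0, Q) ∈ L) (z : ℝ) {X Y : ℝ}
    (hX : 0 ≤ X) (hXY : (m * Q : ℝ) ≤ X * Y) :
    ∃ v ∈ L, v ≠ 0 ∧ |(v.1 : ℝ)| ≤ X ∧ |(v.2 : ℝ) + z * v.1| ≤ Y := by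
  have hmR : (0 : ℝ) < m := by exact_mod_cast hm
  have hQR : (0 : ℝ) < Q := by exact_mod_cast hQ
  rcases lt_or_ge X m with hXm | hmX
  · refine ⟨(0, Q), hQL, by simp [hQ.ne'], by simpa using hX, ?_⟩
    simp only [Int.cast_zero, mul_zero, add_zero, abs_of_pos hQR]
    nlinarith
  · set N := ⌊X / m⌋₊
    have hN : 0 < N := Nat.floor_pos.mpr ((one_le_div hmR).mpr hmX)
    have hNX : N * m ≤ X := (le_div_iff₀ hmR).mp (Nat.floor_le (by positivity))
    have hXN : X < (N + 1) * m := (div_lt_iff₀ hmR).mp (Nat.lt_floor_add_one _)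
    obtain ⟨s, k, hk0, hkN, hks⟩ := Real.exists_int_int_abs_mul_sub_le ((β + z * m) / Q) hN
    have hkR : (1 : ℝ) ≤ k := by exact_mod_cast hk0
    have hkNR : (k : ℝ) ≤ N := by exact_mod_cast hkN
    refine ⟨k • (m, β) - s • (0, Q), L.sub_mem (L.zsmul_mem hmβ k) (L.zsmul_mem hQL s), ?_, ?_, ?_⟩
    · simp [Prod.ext_iff, hk0.ne', hm.ne']
    · simp only [Prod.fst_sub, Prod.smul_fst, smul_eq_mul, mul_zero, sub_zero, Int.cast_mul]
      rw [abs_of_pos (by positivity)]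
      nlinarith
    · have hlin : ((k * β - s * Q : ℤ) : ℝ) + z * (k * m : ℤ) =
          Q * (k * ((β + z * m) / Q) - s) := by
        push_cast; field_simp; ring
      have hQY : Q / (N + 1 : ℝ) ≤ Y := by
        rw [div_le_iff₀ (by positivity)]; nlinarith
      simp only [Prod.fst_sub, Prod.snd_sub, Prod.smul_fst, Prod.smul_snd, smul_eq_mul, mul_zero,
        sub_zero]
      rw [hlin, abs_mul, abs_of_pos hQR]
      calc (Q : ℝ) * |k * ((β + z * m) / Q) - s| ≤ Q * (1 / (N + 1)) := by gcongr
        _ ≤ Y := by rwa [mul_one_div]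

def congruenceLattice (p r q : ℤ) : AddSubgroup (ℤ × ℤ) where
  carrier := {v | q ∣ v.1 * p + v.2 * r}
  add_mem' {v w} hv hw := by
    simpa only [Set.mem_ofPred_eq, Prod.fst_add, Prod.snd_add, add_mul, add_add_add_comm]
      using dvd_add hv hw
  zero_mem' := by simp
  neg_mem' {v} hv := by
    simpa only [Set.mem_ofPred_eq, Prod.fst_neg, Prod.snd_neg, neg_mul, ← neg_add, dvd_neg]
      using hv

theorem gcd_mem_congruenceLattice (p r q : ℤ) :
    ((Int.gcd r q : ℤ), -(Int.gcdA r q * p)) ∈ congruenceLattice p r q :=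
  ⟨Int.gcdB r q * p, by linear_combination p * Int.gcd_eq_gcd_ab r q⟩

theorem div_gcd_mem_congruenceLattice (p r q : ℤ) :
    (0, q / Int.gcd r q) ∈ congruenceLattice p r q := by
  refine ⟨r / Int.gcd r q, ?_⟩
  linear_combination (r / Int.gcd r q) * Int.ediv_mul_cancel (Int.gcd_dvd_right r q) -
    (q / Int.gcd r q) * Int.ediv_mul_cancel (Int.gcd_dvd_left r q)

theorem minkowski_linear_forms_application_general
    (lam : ℝ) (z : ℝ)
    (p r : ℤ) (q : ℕ) (hq : 1 ≤ q) :
    ∃ a b c : ℤ, (a, b) ≠ (0, 0) ∧ a * p + b * r + c * q = 0 ∧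
      |(a : ℝ)| ≤ (q : ℝ) ^ lam ∧ |(b : ℝ) + z * a| ≤ (q : ℝ) ^ (1 - lam) := by
  set g : ℤ := (Int.gcd r q : ℤ)
  have hg : 0 < g :=
    Int.natCast_pos.mpr <| Int.gcd_pos_of_ne_zero_right r (by omega : (q : ℤ) ≠ 0)
  have hgq : g * (q / g) = q := Int.mul_ediv_cancel' (Int.gcd_dvd_right r q)
  have hQ : 0 < (q : ℤ) / g := Int.ediv_pos_of_pos_of_dvd (by omega) hg.le (Int.gcd_dvd_right r q)
  have hcovol : ((g : ℝ) * ((q / g : ℤ) : ℝ)) ≤ (q : ℝ) ^ lam * (q : ℝ) ^ (1 - lam) := by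
    rw [← Real.rpow_add (by positivity), add_sub_cancel, Real.rpow_one, ← Int.cast_mul, hgq,
      Int.cast_natCast]
  obtain ⟨⟨a, b⟩, ⟨c, hc⟩, hab, ha, hb⟩ :=
    exists_ne_zero_mem_abs_le_of_mul_le (congruenceLattice p r q) hg hQ
      (gcd_mem_congruenceLattice p r q) (div_gcd_mem_congruenceLattice p r q) z
      (by positivity) hcovol
  exact ⟨a, b, -c, hab, by linear_combination hc, ha, hb⟩

theorem minkowski_linear_forms_application
    (lam : ℝ) (hlam : lam ∈ Set.Ioo (1/2 : ℝ) 1) (z : ℝ)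
    (p r : ℤ) (q : ℕ) (hq : 1 ≤ q) :
    ∃ a b c : ℤ, (a, b) ≠ (0, 0) ∧ a * p + b * r + c * q = 0 ∧
      |(a : ℝ)| ≤ (q : ℝ) ^ lam ∧ |(b : ℝ) + z * a| ≤ (q : ℝ) ^ (1 - lam) :=
  minkowski_linear_forms_application_general lam z p r q hq
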